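/- arXiv:2507.21643 — 2 statements merged into one kernel-verified Lean document; each statement's English description precedes it below -/
import Mathlib

section
/- For all integers n ≥ 0, r ≥ 1, and j ≥ r − 1, ∑_{k=j−r+1}^{n} C(n,k)·{n−k brace r−1}·{k brace j−r+1} = (−1)^{j−r+1}·{n brace j}·(d_{j,r−1} − r·d_{j,r}). -/
/-- Stirling numbers of the second kind. -/
def stirling2 : ℕ → ℕ → ℕ
  | 0, 0 => 1
  | 0, _ + 1 => 0
  | _ + 1, 0 => 0
  | n + 1, k + 1 => (k + 1) * stirling2 n (k + 1) + stirling2 n k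

/-- Derangement numbers `d_n = n! ∑_{i=0}^n (-1)^i / i!`. -/
def derang (n : ℕ) : ℚ :=
  (n.factorial : ℚ) * ∑ i ∈ Finset.range (n + 1), (-1 : ℚ) ^ i / (i.factorial : ℚ)

/-- Partial derangement numbers `d_{n,r}`. -/
def pderang (n r : ℕ) : ℚ :=
  if r ≤ n then (n.choose r : ℚ) * derang (n - r) else 0

/-- Partial deranged Bell numbers `w̃_{n,r}`. -/
def pdb (n r : ℕ) : ℚ :=
  ∑ k ∈ Finset.range (n + 1), (stirling2 n k : ℚ) * pderang k r

lemma stirling2_succ_succ (n k : ℕ) :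
    stirling2 (n+1) (k+1) = (k + 1) * stirling2 n (k + 1) + stirling2 n k := rfl

lemma stirling2_eq_zero_of_lt : ∀ {n k : ℕ}, n < k → stirling2 n k = 0 := by
  intro n
  induction n with
  | zero => intro k h; cases k with
    | zero => omega
    | succ k => rfl
  | succ n ih =>
    intro k h
    cases k with
    | zero => omega
    | succ k => rw [stirling2_succ_succ, ih (by omega), ih (by omega)]; ring

lemma g_symm (n a b : ℕ) :
    ∑ k ∈ Finset.range (n+1), n.choose k * stirling2 (n-k) a * stirling2 k b
    = ∑ k ∈ Finset.range (n+1), n.choose k * stirling2 (n-k) b * stirling2 k a := by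
  rw [← Finset.sum_range_reflect]
  apply Finset.sum_congr rfl
  intro k hk
  simp only [Finset.mem_range] at hk
  have hk' : k ≤ n := by omega
  rw [Nat.add_sub_cancel, Nat.choose_symm hk', Nat.sub_sub_self hk']
  ring

lemma key (n : ℕ) : ∀ a b : ℕ,
    ∑ k ∈ Finset.range (n+1), n.choose k * stirling2 (n-k) a * stirling2 k b
    = (a+b).choose b * stirling2 n (a+b) := by
  induction n with
  | zero =>
    intro a b
    rw [Finset.sum_range_succ, Finset.sum_range_zero, zero_add, Nat.sub_zero]
    cases a with
    | zero => cases b with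
      | zero => rfl
      | succ b =>
        rw [show stirling2 0 (b+1) = 0 from rfl, show (0+(b+1)) = b+1 by omega,
          show stirling2 0 (b+1) = 0 from rfl]
        ring
    | succ a =>
      rw [show stirling2 0 (a+1) = 0 from rfl]
      rw [show (a+1+b) = (a+b)+1 by omega, show stirling2 0 ((a+b)+1) = 0 from rfl]
      ring
  | succ n ih =>
    intro a b
    cases a with
    | zero =>
      rw [Finset.sum_eq_single (n+1)]
      · simp [stirling2]
      · intro k hk hne
        simp only [Finset.mem_range] at hk
        have : n + 1 - k = (n - k) + 1 := by omega
        rw [this, show stirling2 (n-k+1) 0 = 0 from rfl]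
        ring
      · intro h; simp at h
    | succ a =>
      cases b with
      | zero =>
        rw [Finset.sum_eq_single 0]
        · simp [stirling2]
        · intro k hk hne
          obtain ⟨k', rfl⟩ := Nat.exists_eq_succ_of_ne_zero hne
          rw [show stirling2 (k'+1) 0 = 0 from rfl]
          ring
        · intro h; simp at h
      | succ b =>
        rw [Finset.sum_range_succ' (fun k => (n+1).choose k * stirling2 (n+1-k) (a+1) * stirling2 k (b+1)) (n+1)]
        rw [show (n+1).choose 0 * stirling2 (n+1-0) (a+1) * stirling2 0 (b+1) = 0 by
          rw [show stirling2 0 (b+1) = 0 from rfl]; ring, add_zero]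
        have hstep : ∀ k, (n+1).choose (k+1) * stirling2 (n+1-(k+1)) (a+1) * stirling2 (k+1) (b+1)
            = n.choose k * stirling2 (n-k) (a+1) * stirling2 (k+1) (b+1)
              + n.choose (k+1) * stirling2 (n-k) (a+1) * stirling2 (k+1) (b+1) := by
          intro k
          rw [Nat.choose_succ_succ, Nat.succ_sub_succ]; ring
        rw [Finset.sum_congr rfl (fun k _ => hstep k), Finset.sum_add_distrib]
        have hB : ∑ k ∈ Finset.range (n+1), n.choose (k+1) * stirling2 (n-k) (a+1) * stirling2 (k+1) (b+1)
            = ∑ k ∈ Finset.range (n+1), n.choose k * stirling2 (n-k) (b+1) * stirling2 (k+1) (a+1) := by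
          rw [Finset.sum_range_succ, Finset.sum_range_succ]
          rw [Nat.choose_succ_self, Nat.sub_self, show stirling2 0 (b+1) = 0 from rfl]
          simp only [zero_mul, mul_zero, add_zero]
          rw [← Finset.sum_range_reflect]
          apply Finset.sum_congr rfl
          intro k hk
          simp only [Finset.mem_range] at hk
          have h1 : n - 1 - k + 1 = n - k := by omega
          have h2 : n - (n-1-k) = k+1 := by omega
          rw [h1, h2, show n.choose (n-k) = n.choose k from Nat.choose_symm (by omega)]
          ring
        rw [hB]
        have hA : ∀ a' b' : ℕ,
            ∑ k ∈ Finset.range (n+1), n.choose k * stirling2 (n-k) a' * stirling2 (k+1) (b'+1)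
            = (b'+1) * ((a'+(b'+1)).choose (b'+1) * stirling2 n (a'+(b'+1)))
              + (a'+b').choose b' * stirling2 n (a'+b') := by
          intro a' b'
          have hstep2 : ∀ k, n.choose k * stirling2 (n-k) a' * stirling2 (k+1) (b'+1)
              = (b'+1) * (n.choose k * stirling2 (n-k) a' * stirling2 k (b'+1))
                + n.choose k * stirling2 (n-k) a' * stirling2 k b' := by
            intro k; rw [stirling2_succ_succ]; ring
          rw [Finset.sum_congr rfl (fun k _ => hstep2 k), Finset.sum_add_distrib,
            ← Finset.mul_sum, ih a' (b'+1), ih a' b']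
        rw [hA (a+1) b, hA (b+1) a]
        simp only [show a+1+(b+1) = a+b+2 by omega, show b+1+(a+1) = a+b+2 by omega,
          show a+1+b = a+b+1 by omega, show b+1+a = a+b+1 by omega]
        have hc1 : (a+b+2).choose (a+1) = (a+b+2).choose (b+1) := by
          rw [← Nat.choose_symm (show a+1 ≤ a+b+2 by omega)]
          congr 1; omega
        have hc2 : (a+b+1).choose a = (a+b+1).choose (b+1) := by
          rw [← Nat.choose_symm (show a ≤ a+b+1 by omega)]
          congr 1; omega
        rw [hc1, hc2]
        rw [show a+b+2 = (a+b+1)+1 by omega, stirling2_succ_succ n (a+b+1),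
          Nat.choose_succ_succ (a+b+1) b]
        ring

lemma derang_zero : derang 0 = 1 := by simp [derang]

lemma derang_succ (m : ℕ) : derang (m+1) = (m+1) * derang m + (-1)^(m+1) := by
  unfold derang
  rw [Finset.sum_range_succ, mul_add]
  have h1 : ((m+1).factorial : ℚ) = (m+1) * m.factorial := by
    rw [Nat.factorial_succ]; push_cast; ring
  have h2 : ((m+1).factorial : ℚ) ≠ 0 := by
    exact_mod_cast Nat.factorial_ne_zero (m+1)
  congr 1
  · rw [h1]; ring
  · rw [mul_div_cancel₀ _ h2]

lemma rc_eq (r j : ℕ) (hr : 1 ≤ r) (hrj : r ≤ j) :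
    r * j.choose r = (j-r+1) * j.choose (j-r+1) := by
  obtain ⟨j', rfl⟩ : ∃ j', j = j'+1 := ⟨j-1, by omega⟩
  obtain ⟨r', rfl⟩ : ∃ r', r = r'+1 := ⟨r-1, by omega⟩
  have hsub : j'+1-(r'+1) = j'-r' := by omega
  rw [hsub]
  have a1 := Nat.add_one_mul_choose_eq j' r'
  have a2 := Nat.add_one_mul_choose_eq j' (j'-r')
  have a3 : j'.choose r' = j'.choose (j'-r') := (Nat.choose_symm (by omega)).symm
  have key : (j'+1).choose (r'+1) * (r'+1) = (j'+1).choose (j'-r'+1) * (j'-r'+1) := by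
    rw [← a1, ← a2, a3]
  rw [mul_comm, key, mul_comm]

/-- For `r ≥ 1` and `j ≥ r - 1`,
`∑_{k=j-r+1}^n C(n,k) {n-k brace r-1} {k brace j-r+1}
  = (-1)^{j-r+1} {n brace j} (d_{j,r-1} - r d_{j,r})`. -/
theorem sum_choose_stirling_eq_neg_one_pow (n r j : ℕ) (hr : 1 ≤ r) (hj : r - 1 ≤ j) :
    ∑ k ∈ Finset.Icc (j + 1 - r) n,
        (n.choose k : ℚ) * (stirling2 (n - k) (r - 1) : ℚ) * (stirling2 k (j + 1 - r) : ℚ) =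
      (-1 : ℚ) ^ (j + 1 - r) * (stirling2 n j : ℚ) *
        (pderang j (r - 1) - (r : ℚ) * pderang j r) := by
  have h1 : ∑ k ∈ Finset.Icc (j + 1 - r) n,
        (n.choose k : ℚ) * (stirling2 (n - k) (r - 1) : ℚ) * (stirling2 k (j + 1 - r) : ℚ)
      = ∑ k ∈ Finset.range (n+1),
        (n.choose k : ℚ) * (stirling2 (n - k) (r - 1) : ℚ) * (stirling2 k (j + 1 - r) : ℚ) := by
    apply Finset.sum_subset
    · intro x hx
      simp only [Finset.mem_Icc] at hx
      simp only [Finset.mem_range]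
      omega
    · intro x hx hnx
      simp only [Finset.mem_range] at hx
      simp only [Finset.mem_Icc] at hnx
      rw [stirling2_eq_zero_of_lt (show x < j+1-r by omega)]
      simp
  have h2 : ∑ k ∈ Finset.range (n+1),
        (n.choose k : ℚ) * (stirling2 (n - k) (r - 1) : ℚ) * (stirling2 k (j + 1 - r) : ℚ)
      = ((j.choose (j+1-r) : ℕ) : ℚ) * (stirling2 n j : ℚ) := by
    have hk := key n (r-1) (j+1-r)
    have hjj : (r-1)+(j+1-r) = j := by omega
    rw [hjj] at hk
    calc ∑ k ∈ Finset.range (n+1),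
          (n.choose k : ℚ) * (stirling2 (n - k) (r - 1) : ℚ) * (stirling2 k (j + 1 - r) : ℚ)
        = ((∑ k ∈ Finset.range (n+1),
            n.choose k * stirling2 (n - k) (r - 1) * stirling2 k (j + 1 - r) : ℕ) : ℚ) := by
          push_cast; rfl
      _ = ((j.choose (j+1-r) : ℕ) : ℚ) * (stirling2 n j : ℚ) := by rw [hk]; push_cast; ring
  rw [h1, h2]
  have h3 : ((j.choose (j+1-r) : ℕ) : ℚ)
      = (-1:ℚ)^(j+1-r) * (pderang j (r-1) - (r:ℚ) * pderang j r) := by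
    by_cases hcase : r ≤ j
    · have hm : j+1-r = (j-r)+1 := by omega
      have e1 : pderang j (r-1) = (j.choose ((j-r)+1) : ℚ) * derang ((j-r)+1) := by
        rw [pderang, if_pos (by omega : r-1 ≤ j)]
        rw [show j-(r-1) = (j-r)+1 by omega,
          show j.choose (r-1) = j.choose ((j-r)+1) by
            rw [← Nat.choose_symm (show r-1 ≤ j by omega)]; congr 1; omega]
      have e2 : pderang j r = (j.choose r : ℚ) * derang (j-r) := by
        rw [pderang, if_pos hcase]
      have e4q : (r:ℚ) * (j.choose r : ℚ)
          = (((j-r:ℕ):ℚ)+1) * (j.choose ((j-r)+1) : ℚ) := by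
        have := rc_eq r j hr hcase
        exact_mod_cast this
      have hsq : ((-1:ℚ))^((j-r)+1) * ((-1:ℚ))^((j-r)+1) = 1 := by
        rw [← pow_add, show ((j-r)+1)+((j-r)+1) = 2*((j-r)+1) by ring, pow_mul]
        norm_num
      have h2k : ((-1:ℚ))^((j-r)*2) = 1 := by
        rw [pow_mul]; norm_num
        exact neg_one_pow_eq_or ℚ (j-r)
      rw [hm, e1, e2, derang_succ (j-r)]
      linear_combination (((-1:ℚ))^((j-r)+1) * derang (j-r)) * e4q
        + ((j.choose ((j-r)+1) : ℕ) : ℚ) * hsq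
        - ((j.choose ((j-r)+1) : ℕ) : ℚ) * 2 * h2k
    · have hrj : r = j+1 := by omega
      subst hrj
      rw [show j+1-(j+1) = 0 by omega, show j+1-1 = j by omega]
      simp [pderang, derang_zero]
  rw [h3]
  ring
end

section
/- For all integers n ≥ j ≥ 0 and r ≥ 1, C(j+r,r) · ∑_{k=j}^{n} C(n+r,k+r)·{k+r brace j+r}·B_{n−k}^{(r)} = C(n+r,r)·{n brace j} (an identity in the rational numbers). In particular, for r = 1: (j+1) · ∑_{k=j}^{n} C(n+1,k+1)·{k+1 brace j+1}·B_{n−k} = (n+1)·{n brace j}, where B_j are the classical Bernoulli numbers (with B_1 = −1/2). -/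
/-- Higher-order Bernoulli numbers `B_n^{(r)}`, with `bernoulli 1 = -1/2`. -/
def bernHigher : ℕ → ℕ → ℚ
  | 0, n => if n = 0 then 1 else 0
  | r + 1, n =>
      ∑ k ∈ Finset.range (n + 1), (n.choose k : ℚ) * bernoulli k * bernHigher r (n - k)

/-!
The exponential generating function of `{n brace p}` is `(eᵗ - 1)ᵖ / p!` and that of `B_n^{(r)}` is
`(t / (eᵗ - 1))ʳ`, so `(eᵗ - 1)^(j + r) · (t / (eᵗ - 1))ʳ = tʳ (eᵗ - 1)ʲ`. Comparing the coefficients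
of `t^(n + r)` gives the identity; the binomial coefficients collect the factorials `(j + r)!/j!` and
`(n + r)!/n!`.
-/

open Finset PowerSeries
open Nat (stirlingSecond)
open scoped Nat

theorem stirling2_eq_stirlingSecond : stirling2 = stirlingSecond := by
  funext n k
  induction n generalizing k with
  | zero => cases k <;> rfl
  | succ n ih => cases k <;> simp [stirling2, stirlingSecond, ih]

section ExponentialGeneratingFunction

variable {K : Type*} [Field K]

def egf (a : ℕ → K) : K⟦X⟧ :=
  mk fun n => a n / n !

theorem coeff_egf (a : ℕ → K) (n : ℕ) : coeff n (egf a) = a n / n ! :=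
  coeff_mk _ _

variable [CharZero K]

theorem egf_injective : Function.Injective (egf (K := K)) := by
  intro a b h
  funext n
  have := congrArg (coeff n) h
  rwa [coeff_egf, coeff_egf, div_left_inj' (Nat.cast_ne_zero.2 n.factorial_ne_zero)] at this

theorem egf_mul_egf (a b : ℕ → K) :
    egf a * egf b = egf fun n => ∑ k ∈ range (n + 1), (n.choose k : K) * a k * b (n - k) := by
  ext n
  rw [coeff_mul, Nat.sum_antidiagonal_eq_sum_range_succ_mk, coeff_egf, sum_div]
  refine sum_congr rfl fun k hk => ?_
  have hk : k ≤ n := Nat.lt_succ_iff.1 (mem_range.1 hk)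
  rw [coeff_egf, coeff_egf, Nat.cast_choose K hk]
  have := Nat.cast_ne_zero (R := K) |>.2 n.factorial_ne_zero
  field_simp

variable [Algebra ℚ K]

theorem coeff_exp_sub_one_pow (n p : ℕ) :
    coeff n ((exp K - 1) ^ p) = (p ! * stirlingSecond n p : K) / n ! := by
  induction n generalizing p with
  | zero => cases p <;> simp
  | succ n ih =>
    cases p with
    | zero => simp [coeff_one]
    | succ p =>
      -- differentiating `(eˣ - 1)^(p + 1)` reproduces the triangular recurrence of `stirlingSecond`
      have hderiv : d⁄dX K ((exp K - 1) ^ (p + 1)) =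
          C ((p : K) + 1) * ((exp K - 1) ^ (p + 1) + (exp K - 1) ^ p) := by
        rw [derivative_pow, map_sub, derivative_exp, derivative_one, map_add, map_natCast, map_one]
        push_cast
        ring
      have h := coeff_derivative ((exp K - 1) ^ (p + 1)) n
      rw [hderiv, coeff_C_mul, map_add, ih, ih] at h
      have hn : (n ! : K) ≠ 0 := Nat.cast_ne_zero.2 n.factorial_ne_zero
      rw [eq_div_iff (Nat.cast_ne_zero.2 (n + 1).factorial_ne_zero), Nat.factorial_succ,
        Nat.factorial_succ, Nat.stirlingSecond_succ_succ]
      rw [Nat.factorial_succ] at h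
      field_simp at h
      push_cast at h ⊢
      linear_combination -h

theorem exp_sub_one_pow_eq_egf (p : ℕ) :
    (exp K - 1) ^ p = egf fun n => (p ! * stirlingSecond n p : K) := by
  ext n
  rw [coeff_exp_sub_one_pow, coeff_egf]

end ExponentialGeneratingFunction

theorem bernoulliPowerSeries_eq_egf : bernoulliPowerSeries ℚ = egf bernoulli := by
  ext n
  simp [bernoulliPowerSeries, coeff_egf]

theorem bernoulliPowerSeries_pow_eq_egf (r : ℕ) :
    bernoulliPowerSeries ℚ ^ r = egf (bernHigher r) := by
  induction r with
  | zero =>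
    ext n
    cases n <;> simp [coeff_egf, coeff_one, bernHigher]
  | succ r ih =>
    rw [_root_.pow_succ', ih, bernoulliPowerSeries_eq_egf, egf_mul_egf]
    rfl

theorem bernHigher_one : bernHigher 1 = bernoulli :=
  egf_injective <| by rw [← bernoulliPowerSeries_pow_eq_egf, pow_one, bernoulliPowerSeries_eq_egf]

theorem exp_sub_one_pow_add_mul_bernoulliPowerSeries_pow (A : Type*) [CommRing A] [Algebra ℚ A]
    (j r : ℕ) :
    (exp A - 1) ^ (j + r) * bernoulliPowerSeries A ^ r = X ^ r * (exp A - 1) ^ j := by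
  rw [← bernoulliPowerSeries_mul_exp_sub_one, mul_pow]
  ring

theorem sum_choose_mul_stirlingSecond_mul_bernHigher (n j r : ℕ) :
    ∑ k ∈ range (n + r + 1), ((n + r).choose k : ℚ) * ((j + r)! * stirlingSecond k (j + r)) *
        bernHigher r (n + r - k) =
      (n + r)! / n ! * (j ! * stirlingSecond n j) := by
  have h := congrArg (coeff (n + r)) (exp_sub_one_pow_add_mul_bernoulliPowerSeries_pow ℚ j r)
  rw [exp_sub_one_pow_eq_egf, bernoulliPowerSeries_pow_eq_egf, exp_sub_one_pow_eq_egf,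
    egf_mul_egf, coeff_egf, coeff_X_pow_mul, coeff_egf,
    div_eq_iff (Nat.cast_ne_zero.2 (n + r).factorial_ne_zero)] at h
  rw [h]
  ring

theorem sum_Icc_choose_mul_stirlingSecond_mul_bernHigher_eq_sum_range (n j r : ℕ) :
    ∑ k ∈ Icc j n, ((n + r).choose (k + r) : ℚ) * stirlingSecond (k + r) (j + r) *
        bernHigher r (n - k) =
      ∑ k ∈ range (n + r + 1), ((n + r).choose k : ℚ) * stirlingSecond k (j + r) *
        bernHigher r (n + r - k) := by
  calc _ = ∑ k ∈ Icc (j + r) (n + r), ((n + r).choose k : ℚ) * stirlingSecond k (j + r) *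
        bernHigher r (n + r - k) := by
        simp only [← map_add_right_Icc j n r, sum_map, addRightEmbedding_apply,
          Nat.add_sub_add_right]
    _ = _ := by
      refine sum_subset (fun k hk => ?_) fun k hk hk' => ?_
      · simp only [mem_Icc, mem_range] at hk ⊢
        omega
      · simp only [mem_Icc, mem_range] at hk hk'
        rw [Nat.stirlingSecond_eq_zero_of_lt (by omega)]
        simp

theorem choose_mul_sum_stirlingSecond_bernHigher (n j r : ℕ) :
    ((j + r).choose r : ℚ) * ∑ k ∈ Icc j n,
        ((n + r).choose (k + r) : ℚ) * stirlingSecond (k + r) (j + r) * bernHigher r (n - k) =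
      ((n + r).choose r : ℚ) * stirlingSecond n j := by
  have h := sum_choose_mul_stirlingSecond_mul_bernHigher n j r
  simp only [mul_left_comm _ ((j + r)! : ℚ), mul_assoc, ← mul_sum] at h
  rw [sum_Icc_choose_mul_stirlingSecond_mul_bernHigher_eq_sum_range, ← Nat.choose_symm_add,
    ← Nat.choose_symm_add, Nat.cast_add_choose, Nat.cast_add_choose]
  field_simp at h ⊢
  linear_combination h

theorem choose_mul_sum_stirling_bernHigher_general (n j r : ℕ) :
    (((j + r).choose r : ℚ) * ∑ k ∈ Finset.Icc j n,
        ((n + r).choose (k + r) : ℚ) * (stirling2 (k + r) (j + r) : ℚ) * bernHigher r (n - k) =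
      ((n + r).choose r : ℚ) * (stirling2 n j : ℚ)) ∧
    (((j : ℚ) + 1) * ∑ k ∈ Finset.Icc j n,
        ((n + 1).choose (k + 1) : ℚ) * (stirling2 (k + 1) (j + 1) : ℚ) * bernoulli (n - k) =
      ((n : ℚ) + 1) * (stirling2 n j : ℚ)) := by
  rw [stirling2_eq_stirlingSecond]
  refine ⟨choose_mul_sum_stirlingSecond_bernHigher n j r, ?_⟩
  simpa [bernHigher_one] using choose_mul_sum_stirlingSecond_bernHigher n j 1

/-- For `n ≥ j ≥ 0` and `r ≥ 1`,
`C(j+r,r) ∑_{k=j}^n C(n+r,k+r) {k+r brace j+r} B_{n-k}^{(r)} = C(n+r,r) {n brace j}`;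
in particular for `r = 1`,
`(j+1) ∑_{k=j}^n C(n+1,k+1) {k+1 brace j+1} B_{n-k} = (n+1) {n brace j}`. -/
theorem choose_mul_sum_stirling_bernHigher (n j r : ℕ) (hj : j ≤ n) (hr : 1 ≤ r) :
    (((j + r).choose r : ℚ) * ∑ k ∈ Finset.Icc j n,
        ((n + r).choose (k + r) : ℚ) * (stirling2 (k + r) (j + r) : ℚ) * bernHigher r (n - k) =
      ((n + r).choose r : ℚ) * (stirling2 n j : ℚ)) ∧
    (((j : ℚ) + 1) * ∑ k ∈ Finset.Icc j n,
        ((n + 1).choose (k + 1) : ℚ) * (stirling2 (k + 1) (j + 1) : ℚ) * bernoulli (n - k) =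
      ((n : ℚ) + 1) * (stirling2 n j : ℚ)) :=
  choose_mul_sum_stirling_bernHigher_general n j r
end
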